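/- For the number 819, the quantity ω = lcm(16, 14, 26, 272) = 24752 is a period: for all c ≥ 1, 819·ρ_{c,3} is v-palindromic if and only if 819·ρ_{c+24752,3} is v-palindromic. -/
import Mathlib

set_option maxRecDepth 8000


/-- `v n` is the sum of the primes and of the exponents greater than 1
in the prime factorization of `n` (exponents equal to 1 are omitted). -/
def v (n : ℕ) : ℕ :=
  ∑ p ∈ n.primeFactors, (p + if n.factorization p = 1 then 0 else n.factorization p)

/-- decimal digit reversal -/
def r (n : ℕ) : ℕ := Nat.ofDigits 10 (Nat.digits 10 n).reverse

/-- `n` is v-palindromic if `10 ∤ n`, `n ≠ r n` and `v n = v (r n)`. -/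
def VPalindromic (n : ℕ) : Prop := ¬ (10 ∣ n) ∧ n ≠ r n ∧ v n = v (r n)

/-- `ρ_{c,k}` -/
def rho (c k : ℕ) : ℕ := ∑ i ∈ Finset.range c, 10 ^ (k * i)

/-- `φ_{p,δ}(α) = v(p^{α+δ}) - v(p^α)` as an integer. -/
def phi (p δ α : ℕ) : ℤ := (v (p ^ (α + δ)) : ℤ) - (v (p ^ α) : ℤ)

/- ## basic rho facts -/

lemma rho_succ (c : ℕ) : rho (c+1) 3 = 1 + 1000 * rho c 3 := by
  unfold rho
  rw [Finset.sum_range_succ']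
  simp only [Nat.mul_zero, pow_zero]
  rw [add_comm]
  congr 1
  rw [Finset.mul_sum]
  apply Finset.sum_congr rfl
  intro i _
  rw [show 3*(i+1) = 3*i + 3 by ring, pow_add]
  ring

lemma rho_pos {c : ℕ} (hc : 1 ≤ c) : 0 < rho c 3 := by
  obtain ⟨d, rfl⟩ : ∃ d, c = d + 1 := ⟨c - 1, by omega⟩
  rw [rho_succ]; omega

lemma rho999 (c : ℕ) : 999 * rho c 3 + 1 = 10 ^ (3*c) := by
  induction c with
  | zero => simp [rho]
  | succ n ih =>
    rw [rho_succ, show 3*(n+1) = 3*n+3 by ring, pow_add]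
    omega

lemma rho_mod10 {c : ℕ} (hc : 1 ≤ c) : rho c 3 % 10 = 1 := by
  obtain ⟨d, rfl⟩ : ∃ d, c = d + 1 := ⟨c - 1, by omega⟩
  rw [rho_succ]; omega

/- ## digits -/

def L819 : ℕ → List ℕ
  | 0 => []
  | n+1 => 9 :: 1 :: 8 :: L819 n

def L918 : ℕ → List ℕ
  | 0 => []
  | n+1 => 8 :: 1 :: 9 :: L918 n

lemma digits_step819 (m : ℕ) :
    Nat.digits 10 (819 + 1000 * m) = 9 :: 1 :: 8 :: Nat.digits 10 m := by
  rw [Nat.digits_def' (by norm_num : (1:ℕ) < 10) (by omega),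
    show (819 + 1000*m) % 10 = 9 by omega, show (819 + 1000*m)/10 = 81 + 100*m by omega,
    Nat.digits_def' (by norm_num : (1:ℕ) < 10) (by omega),
    show (81 + 100*m) % 10 = 1 by omega, show (81 + 100*m)/10 = 8 + 10*m by omega,
    Nat.digits_def' (by norm_num : (1:ℕ) < 10) (by omega),
    show (8 + 10*m) % 10 = 8 by omega, show (8 + 10*m)/10 = m by omega]

lemma digits_M1 (c : ℕ) : Nat.digits 10 (819 * rho c 3) = L819 c := by
  induction c with
  | zero => simp [rho, L819]
  | succ n ih =>
    rw [rho_succ, show 819 * (1 + 1000 * rho n 3) = 819 + 1000 * (819 * rho n 3) by ring,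
      digits_step819, ih]
    rfl

lemma L918_append (n : ℕ) : L918 n ++ [8,1,9] = 8 :: 1 :: 9 :: L918 n := by
  induction n with
  | zero => rfl
  | succ n ih => rw [L918, List.cons_append, List.cons_append, List.cons_append, ih]

lemma L819_reverse (n : ℕ) : (L819 n).reverse = L918 n := by
  induction n with
  | zero => rfl
  | succ n ih =>
    rw [L819, List.reverse_cons, List.reverse_cons, List.reverse_cons, ih]
    simp [L918_append, L918]

lemma ofDigits_L918 (c : ℕ) : Nat.ofDigits 10 (L918 c) = 918 * rho c 3 := by
  induction c with
  | zero => simp [L918, rho]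
  | succ n ih =>
    rw [L918, rho_succ, Nat.ofDigits_cons, Nat.ofDigits_cons, Nat.ofDigits_cons, ih]
    push_cast
    ring

lemma r_M1 (c : ℕ) : r (819 * rho c 3) = 918 * rho c 3 := by
  unfold r
  rw [digits_M1, L819_reverse, ofDigits_L918]

/- ## orders mod m -/

lemma zmod_pow_iff {m : ℕ} (e : ℕ) (he : 0 < e) (h1 : (10 : ZMod m)^e = 1)
    (h2 : ∀ r < e, (10:ZMod m)^r = 1 → r = 0) (n : ℕ) : (10:ZMod m)^n = 1 ↔ e ∣ n := by
  constructor
  · intro hn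
    have hd : e * (n/e) + n % e = n := Nat.div_add_mod n e
    rw [← hd, pow_add, pow_mul, h1, one_pow, one_mul] at hn
    exact Nat.dvd_of_mod_eq_zero (h2 _ (Nat.mod_lt _ he) hn)
  · rintro ⟨k, rfl⟩; rw [pow_mul, h1, one_pow]

lemma dvd_rho_iff (c m e : ℕ) (hm : 1 < m) (hco : Nat.Coprime m 999)
    (hiff : ∀ n, (10:ZMod m)^n = 1 ↔ e ∣ n) : m ∣ rho c 3 ↔ e ∣ 3*c := by
  haveI : NeZero m := ⟨by omega⟩
  rw [← Nat.Coprime.dvd_mul_left hco, ← ZMod.natCast_eq_zero_iff, ← hiff]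
  have h2 : (999 : ZMod m) * ((rho c 3 : ℕ) : ZMod m) + 1 = 10 ^ (3*c) := by
    have := congrArg (Nat.cast : ℕ → ZMod m) (rho999 c)
    push_cast at this
    exact this
  constructor
  · intro hz
    push_cast at hz
    rw [← h2, hz, zero_add]
  · intro h1
    push_cast
    linear_combination h2 + h1


/- ## the six divisibility criteria -/

lemma dvd7 (c : ℕ) : 7 ∣ rho c 3 ↔ 2 ∣ c := by
  rw [dvd_rho_iff c 7 6 (by norm_num) (by decide)
    (zmod_pow_iff 6 (by norm_num) (by decide) (by decide))]
  omega

lemma dvd49 (c : ℕ) : 49 ∣ rho c 3 ↔ 14 ∣ c := by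
  rw [dvd_rho_iff c 49 42 (by norm_num) (by decide)
    (zmod_pow_iff 42 (by norm_num) (by decide) (by decide))]
  omega

lemma dvd13 (c : ℕ) : 13 ∣ rho c 3 ↔ 2 ∣ c := by
  rw [dvd_rho_iff c 13 6 (by norm_num) (by decide)
    (zmod_pow_iff 6 (by norm_num) (by decide) (by decide))]
  omega

lemma dvd169 (c : ℕ) : 169 ∣ rho c 3 ↔ 26 ∣ c := by
  rw [dvd_rho_iff c 169 78 (by norm_num) (by decide)
    (zmod_pow_iff 78 (by norm_num) (by decide) (by decide))]
  omega

lemma dvd17 (c : ℕ) : 17 ∣ rho c 3 ↔ 16 ∣ c := by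
  rw [dvd_rho_iff c 17 16 (by norm_num) (by decide)
    (zmod_pow_iff 16 (by norm_num) (by decide) (by decide))]
  omega

lemma dvd289 (c : ℕ) : 289 ∣ rho c 3 ↔ 272 ∣ c := by
  rw [dvd_rho_iff c 289 272 (by norm_num) (by decide)
    (zmod_pow_iff 272 (by norm_num) (by decide) (by decide))]
  omega

/- ## properties of v -/

lemma v_mul {a b : ℕ} (ha : a ≠ 0) (hb : b ≠ 0) (h : Nat.Coprime a b) :
    v (a * b) = v a + v b := by
  unfold v
  rw [Nat.primeFactors_mul ha hb, Finset.sum_union h.disjoint_primeFactors]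
  congr 1
  · apply Finset.sum_congr rfl
    intro p hp
    have hpb : ¬ p ∣ b := (Nat.Prime.coprime_iff_not_dvd
      (Nat.prime_of_mem_primeFactors hp)).mp
      (Nat.Coprime.coprime_dvd_left (Nat.dvd_of_mem_primeFactors hp) h)
    have he : (a * b).factorization p = a.factorization p := by
      rw [Nat.factorization_mul ha hb]
      simp [Nat.factorization_eq_zero_of_not_dvd hpb]
    rw [he]
  · apply Finset.sum_congr rfl
    intro p hp
    have hpa : ¬ p ∣ a := (Nat.Prime.coprime_iff_not_dvd
      (Nat.prime_of_mem_primeFactors hp)).mp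
      (Nat.Coprime.coprime_dvd_left (Nat.dvd_of_mem_primeFactors hp) h.symm)
    have he : (a * b).factorization p = b.factorization p := by
      rw [Nat.factorization_mul ha hb]
      simp [Nat.factorization_eq_zero_of_not_dvd hpa]
    rw [he]

/-- value of `v` at a prime power -/
def f (p e : ℕ) : ℕ := if e = 0 then 0 else p + if e = 1 then 0 else e

lemma v_pp {p : ℕ} (hp : p.Prime) (e : ℕ) : v (p ^ e) = f p e := by
  rcases e with _ | e
  · simp [v, f]
  · unfold v f
    rw [Nat.primeFactors_prime_pow (by omega) hp, Finset.sum_singleton,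
      hp.factorization_pow]
    simp

lemma f_add2 (p a : ℕ) : f p (a+2) = p + (a + 2) := by
  unfold f; rw [if_neg (by omega), if_neg (by omega)]

lemma f_add3 (p a : ℕ) : f p (a+3) = p + (a + 3) := by
  unfold f; rw [if_neg (by omega), if_neg (by omega)]

lemma arith (a3 a7 a13 a17 w c : ℕ)
    (f7a : 1 ≤ a7 ↔ 2 ∣ c) (f7b : 2 ≤ a7 ↔ 14 ∣ c)
    (f13a : 1 ≤ a13 ↔ 2 ∣ c) (f13b : 2 ≤ a13 ↔ 26 ∣ c)
    (f17a : 1 ≤ a17 ↔ 16 ∣ c) (f17b : 2 ≤ a17 ↔ 272 ∣ c) :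
    (f 3 (a3+2) + (f 7 (a7+1) + (f 13 (a13+1) + (f 17 a17 + w))) =
     f 2 1 + (f 3 (a3+3) + (f 7 a7 + (f 13 a13 + (f 17 (a17+1) + w))))) ↔
    (¬ 2 ∣ c ∨ (272 ∣ c ∧ ¬ 7 ∣ c ∧ ¬ 13 ∣ c)) := by
  have h7 : a7 = 0 ∨ a7 = 1 ∨ ∃ k, a7 = k + 2 := by
    rcases a7 with _|_|k
    exacts [Or.inl rfl, Or.inr (Or.inl rfl), Or.inr (Or.inr ⟨k, rfl⟩)]
  have h13 : a13 = 0 ∨ a13 = 1 ∨ ∃ k, a13 = k + 2 := by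
    rcases a13 with _|_|k
    exacts [Or.inl rfl, Or.inr (Or.inl rfl), Or.inr (Or.inr ⟨k, rfl⟩)]
  have h17 : a17 = 0 ∨ a17 = 1 ∨ ∃ k, a17 = k + 2 := by
    rcases a17 with _|_|k
    exacts [Or.inl rfl, Or.inr (Or.inl rfl), Or.inr (Or.inr ⟨k, rfl⟩)]
  rcases h7 with rfl|rfl|⟨k7,rfl⟩ <;> rcases h13 with rfl|rfl|⟨k13,rfl⟩ <;>
      rcases h17 with rfl|rfl|⟨k17,rfl⟩ <;>
    (simp only [zero_add, show ∀ k:ℕ, k+2+1 = k+3 from fun _ => rfl,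
        show (1+1:ℕ) = 2 from rfl, f_add2, f_add3]
     norm_num [f]
     omega)

/- ## the characterization -/

lemma vchar (c : ℕ) (hc : 1 ≤ c) :
    (v (819 * rho c 3) = v (918 * rho c 3)) ↔
      (¬ 2 ∣ c ∨ (272 ∣ c ∧ ¬ 7 ∣ c ∧ ¬ 13 ∣ c)) := by
  set N := rho c 3 with hNdef
  have hN0 : N ≠ 0 := by have := rho_pos hc; omega
  have hodd : ¬ 2 ∣ N := by
    have h := rho999 c
    have h10 : (10:ℕ) ^ (3*c) % 2 = 0 := by
      have h2 : (10:ℕ)^(3*c) = 10^(3*c - 1) * 10 := by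
        rw [← pow_succ]; congr 1; omega
      omega
    omega
  set a3 := N.factorization 3 with ha3
  set a7 := N.factorization 7 with ha7
  set a13 := N.factorization 13 with ha13
  set a17 := N.factorization 17 with ha17
  -- class facts
  have p7 : Nat.Prime 7 := by norm_num
  have p13 : Nat.Prime 13 := by norm_num
  have p17 : Nat.Prime 17 := by norm_num
  have p3 : Nat.Prime 3 := by norm_num
  have f7a : 1 ≤ a7 ↔ 2 ∣ c := by
    rw [ha7, ← Nat.Prime.pow_dvd_iff_le_factorization p7 hN0, pow_one, hNdef, dvd7]
  have f7b : 2 ≤ a7 ↔ 14 ∣ c := by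
    rw [ha7, ← Nat.Prime.pow_dvd_iff_le_factorization p7 hN0, hNdef,
      show (7:ℕ)^2 = 49 by norm_num, dvd49]
  have f13a : 1 ≤ a13 ↔ 2 ∣ c := by
    rw [ha13, ← Nat.Prime.pow_dvd_iff_le_factorization p13 hN0, pow_one, hNdef, dvd13]
  have f13b : 2 ≤ a13 ↔ 26 ∣ c := by
    rw [ha13, ← Nat.Prime.pow_dvd_iff_le_factorization p13 hN0, hNdef,
      show (13:ℕ)^2 = 169 by norm_num, dvd169]
  have f17a : 1 ≤ a17 ↔ 16 ∣ c := by
    rw [ha17, ← Nat.Prime.pow_dvd_iff_le_factorization p17 hN0, pow_one, hNdef, dvd17]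
  have f17b : 2 ≤ a17 ↔ 272 ∣ c := by
    rw [ha17, ← Nat.Prime.pow_dvd_iff_le_factorization p17 hN0, hNdef,
      show (17:ℕ)^2 = 289 by norm_num, dvd289]
  -- decomposition
  have d3 : 3 ^ a3 ∣ N := Nat.ordProj_dvd N 3
  have d7 : 7 ^ a7 ∣ N := Nat.ordProj_dvd N 7
  have d13 : 13 ^ a13 ∣ N := Nat.ordProj_dvd N 13
  have d17 : 17 ^ a17 ∣ N := Nat.ordProj_dvd N 17
  have hK : 3^a3 * (7^a7 * (13^a13 * 17^a17)) ∣ N := by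
    refine Nat.Coprime.mul_dvd_of_dvd_of_dvd ?_ d3 ?_
    · exact Nat.Coprime.mul_right ((by decide : Nat.Coprime 3 7).pow _ _)
        (Nat.Coprime.mul_right ((by decide : Nat.Coprime 3 13).pow _ _)
          ((by decide : Nat.Coprime 3 17).pow _ _))
    · refine Nat.Coprime.mul_dvd_of_dvd_of_dvd ?_ d7 ?_
      · exact Nat.Coprime.mul_right ((by decide : Nat.Coprime 7 13).pow _ _)
          ((by decide : Nat.Coprime 7 17).pow _ _)
      · exact Nat.Coprime.mul_dvd_of_dvd_of_dvd
          ((by decide : Nat.Coprime 13 17).pow _ _) d13 d17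
  set N' := N / (3^a3 * (7^a7 * (13^a13 * 17^a17))) with hN'def
  have hNeq0 : 3^a3 * (7^a7 * (13^a13 * 17^a17)) * N' = N := Nat.mul_div_cancel' hK
  have hNeq : N = 3^a3 * (7^a7 * (13^a13 * (17^a17 * N'))) := by rw [← hNeq0]; ring
  clear_value N'
  have hN'0 : N' ≠ 0 := by
    intro h; rw [h, mul_zero] at hNeq0; omega
  have hN'dvd : N' ∣ N := Dvd.intro_left _ hNeq0
  have h3' : ¬ 3 ∣ N' := by
    intro hd
    have hdd : 3^(a3+1) ∣ N := by
      rw [hNeq, pow_succ]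
      exact Nat.mul_dvd_mul_left _ (hd.trans (Dvd.dvd.mul_left (Dvd.dvd.mul_left (dvd_mul_left N' _) _) _))
    rw [Nat.Prime.pow_dvd_iff_le_factorization p3 hN0] at hdd
    omega
  have h7' : ¬ 7 ∣ N' := by
    intro hd
    have hdd : 7^(a7+1) ∣ N := by
      rw [hNeq, pow_succ]
      exact Dvd.dvd.mul_left (Nat.mul_dvd_mul_left _ (hd.trans (Dvd.dvd.mul_left (dvd_mul_left N' _) _))) _
    rw [Nat.Prime.pow_dvd_iff_le_factorization p7 hN0] at hdd
    omega
  have h13' : ¬ 13 ∣ N' := by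
    intro hd
    have hdd : 13^(a13+1) ∣ N := by
      rw [hNeq, pow_succ]
      exact Dvd.dvd.mul_left (Dvd.dvd.mul_left (Nat.mul_dvd_mul_left _ (hd.trans (dvd_mul_left N' _))) _) _
    rw [Nat.Prime.pow_dvd_iff_le_factorization p13 hN0] at hdd
    omega
  have h17' : ¬ 17 ∣ N' := by
    intro hd
    have hdd : 17^(a17+1) ∣ N := by
      rw [hNeq, pow_succ]
      exact Dvd.dvd.mul_left (Dvd.dvd.mul_left (Dvd.dvd.mul_left (Nat.mul_dvd_mul_left _ hd) _) _) _
    rw [Nat.Prime.pow_dvd_iff_le_factorization p17 hN0] at hdd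
    omega
  have h2' : ¬ 2 ∣ N' := fun hd => hodd (hd.trans hN'dvd)
  have p2 : Nat.Prime 2 := by norm_num
  have c3N' : Nat.Coprime 3 N' := (Nat.Prime.coprime_iff_not_dvd p3).mpr h3'
  have c7N' : Nat.Coprime 7 N' := (Nat.Prime.coprime_iff_not_dvd p7).mpr h7'
  have c13N' : Nat.Coprime 13 N' := (Nat.Prime.coprime_iff_not_dvd p13).mpr h13'
  have c17N' : Nat.Coprime 17 N' := (Nat.Prime.coprime_iff_not_dvd p17).mpr h17'
  have c2N' : Nat.Coprime 2 N' := (Nat.Prime.coprime_iff_not_dvd p2).mpr h2'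
  have hM1 : 819 * N = 3^(a3+2) * (7^(a7+1) * (13^(a13+1) * (17^a17 * N'))) := by
    rw [hNeq]; ring
  have hM2 : 918 * N = 2^1 * (3^(a3+3) * (7^a7 * (13^a13 * (17^(a17+1) * N')))) := by
    rw [hNeq]; ring
  -- nonzero facts
  have e17 : (17:ℕ)^a17 * N' ≠ 0 := mul_ne_zero (pow_ne_zero _ (by norm_num)) hN'0
  have e13 : (13:ℕ)^(a13+1) * (17^a17 * N') ≠ 0 :=
    mul_ne_zero (pow_ne_zero _ (by norm_num)) e17
  have e7 : (7:ℕ)^(a7+1) * (13^(a13+1) * (17^a17 * N')) ≠ 0 :=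
    mul_ne_zero (pow_ne_zero _ (by norm_num)) e13
  have e17b : (17:ℕ)^(a17+1) * N' ≠ 0 := mul_ne_zero (pow_ne_zero _ (by norm_num)) hN'0
  have e13b : (13:ℕ)^a13 * (17^(a17+1) * N') ≠ 0 :=
    mul_ne_zero (pow_ne_zero _ (by norm_num)) e17b
  have e7b : (7:ℕ)^a7 * (13^a13 * (17^(a17+1) * N')) ≠ 0 :=
    mul_ne_zero (pow_ne_zero _ (by norm_num)) e13b
  have e3b : (3:ℕ)^(a3+3) * (7^a7 * (13^a13 * (17^(a17+1) * N'))) ≠ 0 :=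
    mul_ne_zero (pow_ne_zero _ (by norm_num)) e7b
  -- coprimality facts
  have cop3 : Nat.Coprime (3^(a3+2)) (7^(a7+1) * (13^(a13+1) * (17^a17 * N'))) :=
    Nat.Coprime.pow_left _ (Nat.Coprime.mul_right ((by decide : Nat.Coprime 3 7).pow_right _)
      (Nat.Coprime.mul_right ((by decide : Nat.Coprime 3 13).pow_right _)
        (Nat.Coprime.mul_right ((by decide : Nat.Coprime 3 17).pow_right _) c3N')))
  have cop7 : Nat.Coprime (7^(a7+1)) (13^(a13+1) * (17^a17 * N')) :=
    Nat.Coprime.pow_left _ (Nat.Coprime.mul_right ((by decide : Nat.Coprime 7 13).pow_right _)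
      (Nat.Coprime.mul_right ((by decide : Nat.Coprime 7 17).pow_right _) c7N'))
  have cop13 : Nat.Coprime (13^(a13+1)) (17^a17 * N') :=
    Nat.Coprime.pow_left _
      (Nat.Coprime.mul_right ((by decide : Nat.Coprime 13 17).pow_right _) c13N')
  have cop17 : Nat.Coprime (17^a17) N' := Nat.Coprime.pow_left _ c17N'
  have cop2 : Nat.Coprime (2^1) (3^(a3+3) * (7^a7 * (13^a13 * (17^(a17+1) * N')))) :=
    Nat.Coprime.pow_left _ (Nat.Coprime.mul_right ((by decide : Nat.Coprime 2 3).pow_right _)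
      (Nat.Coprime.mul_right ((by decide : Nat.Coprime 2 7).pow_right _)
        (Nat.Coprime.mul_right ((by decide : Nat.Coprime 2 13).pow_right _)
          (Nat.Coprime.mul_right ((by decide : Nat.Coprime 2 17).pow_right _) c2N'))))
  have cop3b : Nat.Coprime (3^(a3+3)) (7^a7 * (13^a13 * (17^(a17+1) * N'))) :=
    Nat.Coprime.pow_left _ (Nat.Coprime.mul_right ((by decide : Nat.Coprime 3 7).pow_right _)
      (Nat.Coprime.mul_right ((by decide : Nat.Coprime 3 13).pow_right _)
        (Nat.Coprime.mul_right ((by decide : Nat.Coprime 3 17).pow_right _) c3N')))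
  have cop7b : Nat.Coprime (7^a7) (13^a13 * (17^(a17+1) * N')) :=
    Nat.Coprime.pow_left _ (Nat.Coprime.mul_right ((by decide : Nat.Coprime 7 13).pow_right _)
      (Nat.Coprime.mul_right ((by decide : Nat.Coprime 7 17).pow_right _) c7N'))
  have cop13b : Nat.Coprime (13^a13) (17^(a17+1) * N') :=
    Nat.Coprime.pow_left _
      (Nat.Coprime.mul_right ((by decide : Nat.Coprime 13 17).pow_right _) c13N')
  have cop17b : Nat.Coprime (17^(a17+1)) N' := Nat.Coprime.pow_left _ c17N'
  have vM1 : v (819 * N) = f 3 (a3+2) + (f 7 (a7+1) + (f 13 (a13+1) + (f 17 a17 + v N'))) := by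
    rw [hM1, v_mul (pow_ne_zero _ (by norm_num)) e7 cop3,
      v_mul (pow_ne_zero _ (by norm_num)) e13 cop7,
      v_mul (pow_ne_zero _ (by norm_num)) e17 cop13,
      v_mul (pow_ne_zero _ (by norm_num)) hN'0 cop17,
      v_pp p3, v_pp p7, v_pp p13, v_pp p17]
  have vM2 : v (918 * N) =
      f 2 1 + (f 3 (a3+3) + (f 7 a7 + (f 13 a13 + (f 17 (a17+1) + v N')))) := by
    rw [hM2, v_mul (pow_ne_zero _ (by norm_num)) e3b cop2,
      v_mul (pow_ne_zero _ (by norm_num)) e7b cop3b,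
      v_mul (pow_ne_zero _ (by norm_num)) e13b cop7b,
      v_mul (pow_ne_zero _ (by norm_num)) e17b cop13b,
      v_mul (pow_ne_zero _ (by norm_num)) hN'0 cop17b,
      v_pp p2, v_pp p3, v_pp p7, v_pp p13, v_pp p17]
  rw [vM1, vM2]
  exact arith a3 a7 a13 a17 (v N') c f7a f7b f13a f13b f17a f17b

lemma vpal_iff (c : ℕ) (hc : 1 ≤ c) :
    VPalindromic (819 * rho c 3) ↔ (¬ 2 ∣ c ∨ (272 ∣ c ∧ ¬ 7 ∣ c ∧ ¬ 13 ∣ c)) := by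
  have hmod : (819 * rho c 3) % 10 = 9 := by
    rw [Nat.mul_mod, rho_mod10 hc]
  have h10 : ¬ (10 ∣ 819 * rho c 3) := by omega
  have hne : 819 * rho c 3 ≠ 918 * rho c 3 := by
    intro h
    have := Nat.eq_of_mul_eq_mul_right (rho_pos hc) h
    omega
  unfold VPalindromic
  rw [r_M1]
  simp only [h10, hne, not_false_iff, true_and, ne_eq, not_true, not_false_eq_true]
  exact vchar c hc

theorem stmt19 :
    Nat.lcm (Nat.lcm 16 14) (Nat.lcm 26 272) = 24752 ∧
    ∀ c : ℕ, 1 ≤ c →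
      (VPalindromic (819 * rho c 3) ↔ VPalindromic (819 * rho (c + 24752) 3)) := by
  refine ⟨by norm_num [Nat.lcm], fun c hc => ?_⟩
  have s2 : 2 ∣ (c+24752) ↔ 2 ∣ c := by omega
  have s272 : 272 ∣ (c+24752) ↔ 272 ∣ c := by omega
  have s7 : 7 ∣ (c+24752) ↔ 7 ∣ c := by omega
  have s13 : 13 ∣ (c+24752) ↔ 13 ∣ c := by omega
  rw [vpal_iff c hc, vpal_iff (c + 24752) (by omega), s2, s272, s7, s13]
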